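/- Let Φ be a TH system on V with primitive idempotents E_0, E*_0 for the first eigenvalues. Then the map E*_0 V -> E_0 V, v ↦ E_0 v, and the map E_0 V -> E*_0 V, v ↦ E*_0 v, are both isomorphisms of one-dimensional K-vector spaces. Consequently there is a nonzero scalar ν ∈ K such that ν E_0 E*_0 E_0 = E_0 and ν E*_0 E_0 E*_0 = E*_0. -/

import Mathlib

/-- A thin Hessenberg system on `V`: multiplicity-free `A`, `Astar` with
orderings of primitive idempotents `E`, `Estar` (eigenvalues `θ`, `θs`)
satisfying the Hessenberg conditions. -/
structure THSystem (K V : Type*) [Field K] [AddCommGroup V] [Module K V] (d : ℕ) where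
  A : Module.End K V
  Astar : Module.End K V
  E : Fin (d + 1) → Module.End K V
  Estar : Fin (d + 1) → Module.End K V
  θ : Fin (d + 1) → K
  θs : Fin (d + 1) → K
  finrank_eq : Module.finrank K V = d + 1
  θ_inj : Function.Injective θ
  θs_inj : Function.Injective θs
  sum_E : ∑ i, E i = 1
  E_mul : ∀ i j, E i * E j = if i = j then E i else 0
  E_ne : ∀ i, E i ≠ 0
  sum_Es : ∑ i, Estar i = 1
  Es_mul : ∀ i j, Estar i * Estar j = if i = j then Estar i else 0
  Es_ne : ∀ i, Estar i ≠ 0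
  A_eq : A = ∑ i, θ i • E i
  As_eq : Astar = ∑ i, θs i • Estar i
  EAsE_zero : ∀ i j : Fin (d + 1), (j : ℕ) + 1 < (i : ℕ) → E i * Astar * E j = 0
  EAsE_ne : ∀ i j : Fin (d + 1), (i : ℕ) = (j : ℕ) + 1 → E i * Astar * E j ≠ 0
  EsAEs_zero : ∀ i j : Fin (d + 1), (j : ℕ) + 1 < (i : ℕ) → Estar i * A * Estar j = 0
  EsAEs_ne : ∀ i j : Fin (d + 1), (i : ℕ) = (j : ℕ) + 1 → Estar i * A * Estar j ≠ 0

/-! `E*₀V` and `E₀V` are lines, since `V` is the direct sum of the `d + 1` nonzero spaces `EᵢV`.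
Because `A` maps `E*ⱼV` into `E*₀V + ⋯ + E*ⱼ₊₁V` with `E*ⱼ₊₁ A E*ⱼ ≠ 0`, an `A`-invariant subspace
containing a nonzero vector of `E*₀V` contains every `E*ⱼV`, so it is `V`. Now `ker E₀` is
`A`-invariant (`E₀ A = θ₀ E₀`) and proper, so `E₀` is injective on `E*₀V`, and dually `E*₀` is
injective on `E₀V`; injective maps between lines are bijective. Finally `E₀ E*₀ E₀ = c E₀` and
`E*₀ E₀ E*₀ = c' E*₀` for scalars `c, c'` because the ranges are lines, and evaluating
`E*₀ E₀ E*₀ E₀` both ways on `E₀V` gives `c = c' ≠ 0`. -/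

open Module LinearMap

section LinearAlgebra

variable {K V : Type*} [Field K] [AddCommGroup V] [Module K V]

theorem Module.End.sum_apply_eq_self {ι : Type*} [Fintype ι] {G : ι → End K V}
    (hG : ∑ i, G i = 1) (x : V) : ∑ i, G i x = x := by
  rw [← LinearMap.sum_apply, hG, Module.End.one_apply]

theorem CompleteOrthogonalIdempotents.finrank_range_eq_one {ι : Type*} [Fintype ι]
    {G : ι → End K V} (hG : CompleteOrthogonalIdempotents G) (hne : ∀ i, G i ≠ 0)
    (hdim : finrank K V = Fintype.card ι) (i : ι) : finrank K (range (G i)) = 1 := by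
  have : FiniteDimensional K V :=
    Module.finite_of_finrank_pos (hdim ▸ Fintype.card_pos_iff.mpr ⟨i⟩)
  have hinj : Function.Injective (LinearMap.pi fun j => (G j).rangeRestrict) := fun x y hxy => by
    rw [← End.sum_apply_eq_self hG.complete x, ← End.sum_apply_eq_self hG.complete y]
    exact Finset.sum_congr rfl fun j _ => congrArg Subtype.val (congrFun hxy j)
  have hsurj : Function.Surjective (LinearMap.pi fun j => (G j).rangeRestrict) := fun f => by
    refine ⟨∑ k, (f k : V), funext fun j => Subtype.ext ?_⟩
    have hfix : ∀ k, G k (f k) = f k := fun k => ((hG.idem k).mem_range_iff).mp (f k).2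
    rw [pi_apply, codRestrict_apply, map_sum, Finset.sum_eq_single j (fun k _ hkj => ?_)
      (by simp), hfix]
    rw [← hfix k, ← Module.End.mul_apply, hG.ortho hkj.symm, LinearMap.zero_apply]
  let e : V ≃ₗ[K] ∀ j, range (G j) := LinearEquiv.ofBijective _ ⟨hinj, hsurj⟩
  have hsum : ∑ j, finrank K (range (G j)) = ∑ _j : ι, 1 := by
    rw [← Module.finrank_pi_fintype, ← e.finrank_eq, hdim, Fintype.card_eq_sum_ones]
  have hpos : ∀ j, 1 ≤ finrank K (range (G j)) := fun j =>
    Submodule.one_le_finrank_iff.mpr (range_eq_bot.not.mpr (hne j))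
  exact ((Finset.sum_eq_sum_iff_of_le fun j _ => hpos j).mp hsum.symm i (Finset.mem_univ i)).symm

theorem Module.End.exists_mul_mul_eq_smul_of_finrank_range_eq_one {P : End K V}
    (hPr : finrank K (range P) = 1) (T : End K V) : ∃ c : K, P * T * P = c • P := by
  obtain ⟨c, hc, -⟩ := LinearMap.existsUnique_eq_smul_id_of_finrank_eq_one hPr
    ((P * T).restrict (p := range P) (q := range P) fun x _ => mem_range_self P (T x))
  refine ⟨c, LinearMap.ext fun y => ?_⟩
  simpa using congrArg Subtype.val (LinearMap.congr_fun hc ⟨P y, mem_range_self P y⟩)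

theorem IsIdempotentElem.exists_smul_mul_mul_eq {P Q : End K V} (hP : IsIdempotentElem P)
    (hPr : finrank K (range P) = 1) (hQr : finrank K (range Q) = 1)
    (hPQ : Disjoint (ker P) (range Q)) (hQP : Disjoint (ker Q) (range P)) :
    ∃ ν : K, ν ≠ 0 ∧ ν • (P * Q * P) = P ∧ ν • (Q * P * Q) = Q := by
  obtain ⟨c, hc⟩ := End.exists_mul_mul_eq_smul_of_finrank_range_eq_one hPr Q
  obtain ⟨c', hc'⟩ := End.exists_mul_mul_eq_smul_of_finrank_range_eq_one hQr P
  obtain ⟨u, hu, hu0⟩ := Submodule.exists_mem_ne_zero_of_ne_bot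
    fun h : range P = ⊥ => by rw [h, finrank_bot] at hPr; exact zero_ne_one hPr
  have hPu : P u = u := hP.mem_range_iff.mp hu
  have hQu : Q u ≠ 0 := fun h => hu0 (Submodule.disjoint_def.mp hQP u h hu)
  have hPQu : P (Q u) ≠ 0 := fun h => hQu (Submodule.disjoint_def.mp hPQ _ h (mem_range_self Q u))
  have hc0 : c ≠ 0 := by
    rintro rfl
    apply hPQu
    simpa [hPu] using LinearMap.congr_fun hc u
  have hcc' : c = c' := by
    have h : Q * (P * Q * P) = Q * P * Q * P := by simp only [mul_assoc]
    rw [hc, hc', mul_smul_comm, smul_mul_assoc] at h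
    have := LinearMap.congr_fun h u
    simp only [LinearMap.smul_apply, Module.End.mul_apply, hPu] at this
    exact smul_left_injective K hQu this
  subst hcc'
  refine ⟨c⁻¹, inv_ne_zero hc0, ?_, ?_⟩
  · rw [hc, smul_smul, inv_mul_cancel₀ hc0, one_smul]
  · rw [hc', smul_smul, inv_mul_cancel₀ hc0, one_smul]

theorem LinearMap.bijective_restrict_range_of_disjoint [FiniteDimensional K V] {P Q : End K V}
    (hrank : finrank K (range Q) = finrank K (range P)) (hPQ : Disjoint (ker P) (range Q)) :
    Function.Bijective
      (P.restrict (p := range Q) (q := range P) fun x _ => mem_range_self P x) := by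
  have hinj : Function.Injective
      (P.restrict (p := range Q) (q := range P) fun x _ => mem_range_self P x) := by
    rw [← ker_eq_bot, ker_restrict, ← Submodule.disjoint_iff_comap_eq_bot]
    exact hPQ.symm
  exact ⟨hinj, (injective_iff_surjective_of_finrank_eq_finrank hrank).mp hinj⟩

end LinearAlgebra

section Hessenberg

variable {K V : Type*} [Field K] [AddCommGroup V] [Module K V] {d : ℕ}
  {B : End K V} {G : Fin (d + 1) → End K V}

theorem range_succ_le_of_hessenberg (hsum : ∑ i, G i = 1)
    (hzero : ∀ i j : Fin (d + 1), (j : ℕ) + 1 < (i : ℕ) → G i * B * G j = 0)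
    (hne : ∀ i j : Fin (d + 1), (i : ℕ) = (j : ℕ) + 1 → G i * B * G j ≠ 0)
    (hG : ∀ i, finrank K (range (G i)) = 1) {W : Submodule K V} (hW : W ∈ B.invtSubmodule)
    (j : Fin d) (hle : ∀ i ≤ j.castSucc, range (G i) ≤ W) : range (G j.succ) ≤ W := by
  obtain ⟨y, hy⟩ := DFunLike.ne_iff.mp (hne j.succ j.castSucc rfl)
  set w := G j.castSucc y
  have hBw : B w ∈ W := hW (hle _ le_rfl (mem_range_self _ y))
  have hother : ∀ i ∈ Finset.univ.erase j.succ, G i (B w) ∈ W := by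
    intro i hi
    rcases le_or_gt i j.castSucc with hij | hij
    · exact hle i hij (mem_range_self _ _)
    · have hlt : (j : ℕ) + 1 < i := by
        have := Fin.val_ne_of_ne (Finset.ne_of_mem_erase hi)
        rw [Fin.lt_def, Fin.val_castSucc] at hij
        rw [Fin.val_succ] at this
        omega
      rw [show G i (B w) = (G i * B * G j.castSucc) y from rfl, hzero i _ hlt]
      exact W.zero_mem
  have hx : G j.succ (B w) ∈ W := by
    refine (Submodule.add_mem_iff_left W (Submodule.sum_mem W hother)).mp ?_
    rwa [Finset.add_sum_erase _ (fun i => G i (B w)) (Finset.mem_univ _),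
      End.sum_apply_eq_self hsum]
  rw [eq_span_singleton_of_mem_of_finrank_eq_one (hG _) (mem_range_self _ _) hy]
  exact (Submodule.span_singleton_le_iff_mem _ _).mpr hx

theorem eq_top_of_mem_invtSubmodule_of_hessenberg (hsum : ∑ i, G i = 1)
    (hzero : ∀ i j : Fin (d + 1), (j : ℕ) + 1 < (i : ℕ) → G i * B * G j = 0)
    (hne : ∀ i j : Fin (d + 1), (i : ℕ) = (j : ℕ) + 1 → G i * B * G j ≠ 0)
    (hG : ∀ i, finrank K (range (G i)) = 1) {W : Submodule K V} (hW : W ∈ B.invtSubmodule)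
    {v : V} (hv : v ∈ range (G 0)) (hv0 : v ≠ 0) (hvW : v ∈ W) : W = ⊤ := by
  have hle : ∀ j i : Fin (d + 1), i ≤ j → range (G i) ≤ W := by
    intro j
    induction j using Fin.induction with
    | zero =>
      intro i hi
      rw [Fin.le_zero_iff.mp hi, eq_span_singleton_of_mem_of_finrank_eq_one (hG 0) hv hv0]
      exact (Submodule.span_singleton_le_iff_mem _ _).mpr hvW
    | succ j ih =>
      intro i hi
      rcases hi.lt_or_eq with h | rfl
      · exact ih i (Fin.le_castSucc_iff.mpr h)
      · exact range_succ_le_of_hessenberg hsum hzero hne hG hW j ih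
  refine Submodule.eq_top_iff'.mpr fun x => ?_
  rw [← End.sum_apply_eq_self hsum x]
  exact Submodule.sum_mem W fun i _ => hle i i le_rfl (mem_range_self _ x)

end Hessenberg

namespace THSystem

variable {K V : Type*} [Field K] [AddCommGroup V] [Module K V] {d : ℕ} (Φ : THSystem K V d)

def dual : THSystem K V d where
  A := Φ.Astar
  Astar := Φ.A
  E := Φ.Estar
  Estar := Φ.E
  θ := Φ.θs
  θs := Φ.θ
  finrank_eq := Φ.finrank_eq
  θ_inj := Φ.θs_inj
  θs_inj := Φ.θ_inj
  sum_E := Φ.sum_Es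
  E_mul := Φ.Es_mul
  E_ne := Φ.Es_ne
  sum_Es := Φ.sum_E
  Es_mul := Φ.E_mul
  Es_ne := Φ.E_ne
  A_eq := Φ.As_eq
  As_eq := Φ.A_eq
  EAsE_zero := Φ.EsAEs_zero
  EAsE_ne := Φ.EsAEs_ne
  EsAEs_zero := Φ.EAsE_zero
  EsAEs_ne := Φ.EAsE_ne

theorem completeOrthogonalIdempotents_E : CompleteOrthogonalIdempotents Φ.E where
  idem i := by simpa [IsIdempotentElem] using Φ.E_mul i i
  ortho i j hij := by simpa [hij] using Φ.E_mul i j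
  complete := Φ.sum_E

theorem finrank_range_E (i : Fin (d + 1)) : finrank K (range (Φ.E i)) = 1 :=
  Φ.completeOrthogonalIdempotents_E.finrank_range_eq_one Φ.E_ne
    (Φ.finrank_eq.trans (Fintype.card_fin _).symm) i

theorem E_mul_A (i : Fin (d + 1)) : Φ.E i * Φ.A = Φ.θ i • Φ.E i := by
  classical
  rw [Φ.A_eq, Finset.mul_sum, Finset.sum_eq_single i (fun j _ hji => ?_) (by simp),
    mul_smul_comm, Φ.E_mul, if_pos rfl]
  rw [mul_smul_comm, Φ.E_mul, if_neg hji.symm, smul_zero]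

theorem ker_E_mem_invtSubmodule (i : Fin (d + 1)) : ker (Φ.E i) ∈ Φ.A.invtSubmodule := by
  intro x hx
  rw [Submodule.mem_comap, mem_ker, ← Module.End.mul_apply, Φ.E_mul_A, LinearMap.smul_apply,
    mem_ker.mp hx, smul_zero]

theorem disjoint_ker_E_range_Estar (i : Fin (d + 1)) :
    Disjoint (ker (Φ.E i)) (range (Φ.Estar 0)) := by
  refine Submodule.disjoint_def.mpr fun v hker hv => ?_
  by_contra hv0
  exact Φ.E_ne i (ker_eq_top.mp (eq_top_of_mem_invtSubmodule_of_hessenberg Φ.sum_Es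
    Φ.EsAEs_zero Φ.EsAEs_ne Φ.dual.finrank_range_E (Φ.ker_E_mem_invtSubmodule i) hv hv0 hker))

end THSystem

/-- The maps `E*_0 V → E_0 V, v ↦ E_0 v` and `E_0 V → E*_0 V, v ↦ E*_0 v` are
isomorphisms, and there is a nonzero scalar `ν` with `ν E_0 E*_0 E_0 = E_0` and
`ν E*_0 E_0 E*_0 = E*_0`. -/
theorem E0_Estar0_maps_bijective {K V : Type*} [Field K] [AddCommGroup V] [Module K V]
    {d : ℕ} (Φ : THSystem K V d) :
    Function.Bijective
      ((Φ.E 0).restrict (p := LinearMap.range (Φ.Estar 0)) (q := LinearMap.range (Φ.E 0))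
        (fun x _ => LinearMap.mem_range_self _ x)) ∧
    Function.Bijective
      ((Φ.Estar 0).restrict (p := LinearMap.range (Φ.E 0)) (q := LinearMap.range (Φ.Estar 0))
        (fun x _ => LinearMap.mem_range_self _ x)) ∧
    ∃ ν : K, ν ≠ 0 ∧
      ν • (Φ.E 0 * Φ.Estar 0 * Φ.E 0) = Φ.E 0 ∧
      ν • (Φ.Estar 0 * Φ.E 0 * Φ.Estar 0) = Φ.Estar 0 := by
  have : FiniteDimensional K V := Module.finite_of_finrank_eq_succ Φ.finrank_eq
  have hE : finrank K (range (Φ.E 0)) = 1 := Φ.finrank_range_E 0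
  have hEs : finrank K (range (Φ.Estar 0)) = 1 := Φ.dual.finrank_range_E 0
  have hdisj : Disjoint (ker (Φ.E 0)) (range (Φ.Estar 0)) := Φ.disjoint_ker_E_range_Estar 0
  have hdisj' : Disjoint (ker (Φ.Estar 0)) (range (Φ.E 0)) := Φ.dual.disjoint_ker_E_range_Estar 0
  exact ⟨bijective_restrict_range_of_disjoint (hEs.trans hE.symm) hdisj,
    bijective_restrict_range_of_disjoint (hE.trans hEs.symm) hdisj',
    (Φ.completeOrthogonalIdempotents_E.idem 0).exists_smul_mul_mul_eq hE hEs hdisj hdisj'⟩
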